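/- arXiv:2402.00804 — 3 statements merged into one kernel-verified Lean document; each statement's English description precedes it below -/
import Mathlib

section
/- Let a finite p-group R act on a finite group X = M_1 × ⋯ × M_t with each M_i isomorphic to a fixed group M and t > 1, and assume R transitively permutes the factors M_i. Let G = X ⋊ R be the corresponding semidirect product. Then R is subnormal in G if and only if M is a p-group. -/
/-- `H` is normal in `K` (both subgroups of an ambient group `G`). -/
def NormalIn {G : Type*} [Group G] (H K : Subgroup G) : Prop :=
  H ≤ K ∧ ∀ k ∈ K, ∀ h ∈ H, k * h * k⁻¹ ∈ H

/-- `H` is subnormal in `K`: there is a chain `H = c 0 ⊴ c 1 ⊴ ⋯ ⊴ c n = K`. -/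
def Subnormal {G : Type*} [Group G] (H K : Subgroup G) : Prop :=
  ∃ (n : ℕ) (c : Fin (n + 1) → Subgroup G),
    c 0 = H ∧ c (Fin.last n) = K ∧ ∀ i : Fin n, NormalIn (c i.castSucc) (c i.succ)

/-- `R` is weakly subnormal in `G`: not subnormal in `G`, but subnormal in every
proper subgroup of `G` containing it. -/
def WeaklySubnormal {G : Type*} [Group G] (R : Subgroup G) : Prop :=
  ¬ Subnormal R ⊤ ∧ ∀ H : Subgroup G, R ≤ H → H ≠ ⊤ → Subnormal R H

/-- `O_p(G)`: the largest normal `p`-subgroup of `G`. -/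
def pCore (p : ℕ) (G : Type*) [Group G] : Subgroup G :=
  sSup {H : Subgroup G | H.Normal ∧ IsPGroup p H}

/-- `O_{p'}(G)`: the largest normal subgroup of `G` of order coprime to `p`. -/
def pPrimeCore (p : ℕ) (G : Type*) [Group G] : Subgroup G :=
  sSup {H : Subgroup G | H.Normal ∧ Nat.Coprime (Nat.card H) p}

theorem normal_sSup {G : Type*} [Group G] {S : Set (Subgroup G)}
    (h : ∀ H ∈ S, H.Normal) : (sSup S).Normal := by
  constructor
  intro x hx g
  have hle : sSup S ≤ (sSup S).comap ((MulAut.conj g).toMonoidHom) := by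
    refine sSup_le fun H hH => fun y hy => ?_
    have : g * y * g⁻¹ ∈ H := (h H hH).conj_mem y hy g
    exact Subgroup.mem_comap.mpr (by simpa using le_sSup hH this)
  simpa using hle hx

instance pCore_normal (p : ℕ) (G : Type*) [Group G] : (pCore p G).Normal :=
  normal_sSup fun _ hH => hH.1

instance pPrimeCore_normal (p : ℕ) (G : Type*) [Group G] : (pPrimeCore p G).Normal :=
  normal_sSup fun _ hH => hH.1

/-- `Z_p^*(G)`: the preimage in `G` of the center of `G / O_{p'}(G)`. -/
def pStarCenter (p : ℕ) (G : Type*) [Group G] : Subgroup G :=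
  (Subgroup.center (G ⧸ pPrimeCore p G)).comap (QuotientGroup.mk' (pPrimeCore p G))

/-- `x` is a `p`-element: its order is a power of `p`. -/
def IsPElement (p : ℕ) {G : Type*} [Group G] (x : G) : Prop :=
  ∃ n : ℕ, orderOf x = p ^ n

/-- A finite group is `p`-solvable iff every simple section is a `p`-group
or a `p'`-group (equivalent to the usual composition-factor definition). -/
def IsPSolvable (p : ℕ) (G : Type*) [Group G] : Prop :=
  ∀ (K : Subgroup G) (H : Subgroup K) [H.Normal],
    IsSimpleGroup (K ⧸ H) → IsPGroup p (K ⧸ H) ∨ Nat.Coprime (Nat.card (K ⧸ H)) p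

/-- The Frattini subgroup of a subgroup `Q ≤ G`, as a subgroup of `G`. -/
def frattiniIn {G : Type*} [Group G] (Q : Subgroup G) : Subgroup G :=
  (frattini Q).map Q.subtype

/-- An elementary abelian `q`-group. -/
def IsElementaryAbelian (q : ℕ) (Q : Type*) [Group Q] : Prop :=
  (∀ x y : Q, x * y = y * x) ∧ ∀ x : Q, x ^ q = 1

/-- A special `q`-group: elementary abelian, or `Φ(Q) = [Q,Q] = Z(Q)`. -/
def IsSpecial (q : ℕ) (Q : Type*) [Group Q] : Prop :=
  IsElementaryAbelian q Q ∨
    (frattini Q = commutator Q ∧ commutator Q = Subgroup.center Q)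

/-- A quasisimple group: perfect, and simple modulo its center. -/
def IsQuasisimple (Q : Type*) [Group Q] : Prop :=
  commutator Q = ⊤ ∧ IsSimpleGroup (Q ⧸ Subgroup.center Q)

/-- A component of `G`: a subnormal quasisimple subgroup. -/
def IsComponent {G : Type*} [Group G] (Q : Subgroup G) : Prop :=
  Subnormal Q ⊤ ∧ IsQuasisimple Q

/-- The layer `E(G)` of `G`: the subgroup generated by the components. -/
def layer (G : Type*) [Group G] : Subgroup G :=
  sSup {Q : Subgroup G | IsComponent Q}

/-- The Fitting subgroup `F(G)`: the largest normal nilpotent subgroup. -/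
def fitting (G : Type*) [Group G] : Subgroup G :=
  sSup {H : Subgroup G | H.Normal ∧ Group.IsNilpotent H}

/-!
A subnormal `p`-subgroup lies in `O_p(G)`: along a subnormal chain `H ⊴ K`, the subgroup
`O_p(H)` is characteristic in `H`, hence normal in `K`, so `O_p(H) ≤ O_p(K)`. If `R` is
subnormal, pick `r ∈ R` moving the factor `i` to a factor `j ≠ i`; for `x = mulSingle i m` the
commutator `[x, r] = x (r x)⁻¹` lies in the `p`-group `O_p(G)`, and its `i`-th coordinate is `m`.
Conversely, if `M` is a `p`-group then so is `G`, and in a finite nilpotent group every subgroup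
is subnormal by the normalizer condition.
-/

open Subgroup

section Subnormal

variable {G : Type*} [Group G]

theorem normalIn_iff_normal_subgroupOf {H K : Subgroup G} (hHK : H ≤ K) :
    NormalIn H K ↔ (H.subgroupOf K).Normal := by
  rw [normal_subgroupOf_iff hHK]
  exact ⟨fun h a k ha hk => h.2 k hk a ha, fun h => ⟨hHK, fun k hk a ha => h a k ha hk⟩⟩

theorem subnormal_top_iff_isSubnormal {H : Subgroup G} : Subnormal H ⊤ ↔ H.IsSubnormal := by
  constructor
  · rintro ⟨n, c, rfl, hlast, hc⟩
    suffices ∀ i, (c i).IsSubnormal from this 0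
    intro i
    induction i using Fin.reverseInduction with
    | last => exact hlast ▸ .top
    | cast i ih =>
      exact .step _ _ (hc i).1 ih ((normalIn_iff_normal_subgroupOf (hc i).1).mp (hc i))
  · intro h
    obtain ⟨n, f, hf, hnormal, rfl, hn⟩ := IsSubnormal.isSubnormal_iff.mp h
    exact ⟨n, fun i => f i, rfl, hn, fun i =>
      (normalIn_iff_normal_subgroupOf (hf (Nat.le_succ i))).mpr (hnormal i)⟩

theorem NormalizerCondition.isSubnormal [Finite G] (hnc : NormalizerCondition G)
    (H : Subgroup G) : H.IsSubnormal := by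
  induction H using WellFoundedGT.induction with
  | _ H ih =>
    rcases eq_or_ne H ⊤ with rfl | hH
    · exact .top
    · exact .step H _ le_normalizer (ih _ (hnc H hH.lt_top)) normal_in_normalizer

end Subnormal

section PCore

variable {p : ℕ} {G : Type*} [Group G]

theorem le_pCore {N : Subgroup G} (hN : N.Normal) (h : IsPGroup p N) : N ≤ pCore p G :=
  le_sSup ⟨hN, h⟩

variable (p G) in
theorem isPGroup_pCore : IsPGroup p (pCore p G) :=
  Sylow.sSup_of_normal _ (fun _ hN => hN.2) (fun _ hN => hN.1)

theorem map_pCore_le {G' : Type*} [Group G'] (e : G ≃* G') :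
    (pCore p G).map e.toMonoidHom ≤ pCore p G' :=
  map_le_iff_le_comap.mpr <| sSup_le fun _ hN => map_le_iff_le_comap.mp <|
    le_pCore (hN.1.map _ e.surjective) (hN.2.map _)

instance pCore_characteristic : (pCore p G).Characteristic :=
  characteristic_iff_map_le.mpr map_pCore_le

theorem map_subtype_pCore_le_of_normal {H K : Subgroup G} (hHK : H ≤ K)
    [(H.subgroupOf K).Normal] :
    (pCore p H).map H.subtype ≤ (pCore p K).map K.subtype := by
  set N := H.subgroupOf K
  have hcore : (pCore p N).map N.subtype ≤ pCore p K :=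
    le_pCore inferInstance ((isPGroup_pCore p N).map _)
  calc (pCore p H).map H.subtype
      = (((pCore p H).map (subgroupOfEquivOfLe hHK).symm.toMonoidHom).map N.subtype).map
          K.subtype := by rw [map_map, map_map]; rfl
    _ ≤ (pCore p K).map K.subtype := map_mono ((map_mono (map_pCore_le _)).trans hcore)

theorem Subgroup.IsSubnormal.map_subtype_pCore_le {H : Subgroup G} (hH : H.IsSubnormal) :
    (pCore p H).map H.subtype ≤ pCore p G := by
  induction hH with
  | top => exact map_pCore_le topEquiv
  | step H K hHK _ hN ih => exact (map_subtype_pCore_le_of_normal hHK).trans ih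

theorem Subgroup.IsSubnormal.le_pCore {H : Subgroup G} (hH : H.IsSubnormal) (hp : IsPGroup p H) :
    H ≤ pCore p G := by
  have htop : pCore p H = ⊤ :=
    top_le_iff.mp (_root_.le_pCore normal_top (hp.of_equiv topEquiv.symm))
  simpa [htop, ← MonoidHom.range_eq_map] using hH.map_subtype_pCore_le (p := p)

end PCore

theorem IsPGroup.pi {p : ℕ} {ι : Type*} [Finite ι] {M : ι → Type*} [∀ i, Group (M i)]
    (h : ∀ i, IsPGroup p (M i)) : IsPGroup p (∀ i, M i) := by
  intro x
  choose k hk using fun i => h i (x i)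
  cases nonempty_fintype ι
  refine ⟨∑ i, k i, funext fun i => ?_⟩
  obtain ⟨c, hc⟩ := Nat.exists_eq_add_of_le (Finset.single_le_sum (fun j _ => (k j).zero_le)
    (Finset.mem_univ i))
  rw [Pi.pow_apply, hc, pow_add, pow_mul, hk i, one_pow, Pi.one_apply]

namespace SemidirectProduct

variable {N G : Type*} [Group N] [Group G] {φ : G →* MulAut N}

instance [Finite N] [Finite G] : Finite (N ⋊[φ] G) :=
  Finite.of_equiv _ equivProd.symm

theorem _root_.IsPGroup.semidirectProduct {p : ℕ} (hN : IsPGroup p N) (hG : IsPGroup p G) :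
    IsPGroup p (N ⋊[φ] G) := by
  have hker : IsPGroup p (rightHom : N ⋊[φ] G →* G).ker := by
    rw [← range_inl_eq_ker_rightHom]
    exact hN.of_surjective _ inl.rangeRestrict_surjective
  have htop := (hG.to_subgroup ⊤).comap_of_ker_isPGroup rightHom hker
  rw [comap_top] at htop
  exact htop.of_equiv topEquiv

theorem inl_mul_inv_aut (n : N) (g : G) :
    (inl (n * (φ g n)⁻¹) : N ⋊[φ] G) = inl n * inr g * (inl n)⁻¹ * (inr g)⁻¹ := by
  rw [map_mul, map_inv, inl_aut, map_inv]
  group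

theorem exists_pow_mul_inv_aut_eq_one {p : ℕ} {P : Subgroup (N ⋊[φ] G)} [P.Normal]
    (hP : IsPGroup p P) (hle : inr.range ≤ P) (n : N) (g : G) :
    ∃ k, (n * (φ g n)⁻¹) ^ p ^ k = 1 := by
  have hmem : inl (n * (φ g n)⁻¹) ∈ P := by
    rw [inl_mul_inv_aut]
    have hg : inr g ∈ P := hle ⟨g, rfl⟩
    exact P.mul_mem (Normal.conj_mem inferInstance _ hg _) (P.inv_mem hg)
  obtain ⟨k, hk⟩ := hP ⟨_, hmem⟩
  exact ⟨k, inl_injective (by simpa using congrArg Subtype.val hk)⟩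

end SemidirectProduct

open SemidirectProduct in
/-- **Lemma (wreath-type actions).** Let a finite `p`-group `R` act on
`X = M₁ × ⋯ × M_t` (`t > 1`, all factors isomorphic to `M`), transitively permuting
the factors. Then `R` is subnormal in `G = X ⋊ R` iff `M` is a `p`-group. -/
theorem statement7 {p : ℕ} (hp : p.Prime) {R M ι : Type*} [Group R] [Group M]
    [Finite R] [Finite M] [Finite ι] [DecidableEq ι]
    (hRp : IsPGroup p R) (ht : 1 < Nat.card ι)
    (φ : R →* MulAut (ι → M)) (σ : R → Equiv.Perm ι)
    (hperm : ∀ (r : R) (i : ι),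
      (MonoidHom.mulSingle (fun _ : ι => M) i).range.map (φ r).toMonoidHom =
        (MonoidHom.mulSingle (fun _ : ι => M) (σ r i)).range)
    (htrans : ∀ i j : ι, ∃ r : R, σ r i = j) :
    Subnormal (SemidirectProduct.inr.range : Subgroup ((ι → M) ⋊[φ] R)) ⊤ ↔
      IsPGroup p M := by
  have := Fact.mk hp
  constructor
  · intro hsub m
    have hR : inr.range ≤ pCore p ((ι → M) ⋊[φ] R) :=
      (subnormal_top_iff_isSubnormal.mp hsub).le_pCore
        (hRp.of_surjective _ inr.rangeRestrict_surjective)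
    obtain ⟨i, j, hij⟩ := (Finite.one_lt_card_iff_nontrivial.mp ht).exists_pair_ne
    obtain ⟨r, rfl⟩ := htrans i j
    obtain ⟨m', hm'⟩ : φ r (Pi.mulSingle i m) ∈ (MonoidHom.mulSingle _ (σ r i)).range :=
      hperm r i ▸ mem_map_of_mem _ ⟨m, rfl⟩
    obtain ⟨k, hk⟩ := exists_pow_mul_inv_aut_eq_one (isPGroup_pCore p _) hR (Pi.mulSingle i m) r
    refine ⟨k, ?_⟩
    simpa [← hm', Pi.mulSingle_eq_of_ne hij] using congrFun hk i
  · intro hM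
    have := ((IsPGroup.pi fun _ => hM).semidirectProduct (φ := φ) hRp).isNilpotent
    exact subnormal_top_iff_isSubnormal.mpr
      (Group.normalizerCondition_of_isNilpotent.isSubnormal _)
end

section
/- Let G be a finite group and let Q be a component of G. Suppose x ∈ G does not normalize Q. Then for every prime r dividing |Q|, there exists an r-element y ∈ E(G) such that the commutator [x,y] is a nontrivial r-element. -/
open Subgroup

section Perfect

variable {Q : Type*} [Group Q] [Finite Q] {r : ℕ} [Fact r.Prime]

-- For central `S`, the kernel of Burnside's transfer `Q →* S` is a normal `r`-complement; as `S`
-- is abelian, that kernel contains `[Q, Q] = Q`, which forces `r ∤ |Q|`.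
open scoped IsMulCommutative in
theorem Sylow.not_le_center_of_commutator_eq_top (hperf : commutator Q = ⊤)
    (hr : r ∣ Nat.card Q) (S : Sylow r Q) : ¬ (S : Subgroup Q) ≤ center Q := by
  intro hS
  have hcent : normalizer (S : Subgroup Q) ≤ centralizer (S : Set Q) := fun g _ s hs =>
    (mem_center_iff.mp (hS hs) g).symm
  have : IsMulCommutative (S : Subgroup Q) :=
    ⟨⟨fun a b => Subtype.ext (hcent (le_normalizer b.2) a a.2)⟩⟩
  have hker : (MonoidHom.transferSylow S hcent).ker = ⊤ :=
    top_le_iff.mp (hperf ▸ Abelianization.commutator_subset_ker _)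
  exact MonoidHom.not_dvd_card_ker_transferSylow S hcent (by rwa [hker, card_top])

theorem exists_isPElement_not_mem_center (hperf : commutator Q = ⊤) (hr : r ∣ Nat.card Q) :
    ∃ y : Q, IsPElement r y ∧ y ∉ center Q := by
  obtain ⟨S⟩ := (inferInstance : Nonempty (Sylow r Q))
  obtain ⟨y, hyS, hy⟩ := Set.not_subset.mp (S.not_le_center_of_commutator_eq_top hperf hr)
  obtain ⟨k, hk⟩ := IsPGroup.iff_orderOf.mp S.isPGroup' ⟨y, hyS⟩
  exact ⟨y, ⟨k, by rwa [orderOf_mk] at hk⟩, hy⟩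

end Perfect

namespace IsQuasisimple

variable {Q : Type*} [Group Q]

theorem of_mulEquiv {Q' : Type*} [Group Q'] (hQ : IsQuasisimple Q) (e : Q ≃* Q') :
    IsQuasisimple Q' := by
  have hcenter : (center Q').map e.symm.toMonoidHom = center Q := by
    ext g
    rw [mem_map_equiv, MulEquiv.symm_symm, ← SetLike.mem_coe, coe_center, ← SetLike.mem_coe,
      coe_center]
    exact MulEquivClass.apply_mem_center_iff e
  have := hQ.2
  refine ⟨?_, (QuotientGroup.congr _ _ e.symm hcenter).isSimpleGroup⟩
  rw [_root_.commutator_def, ← map_top_of_surjective e.toMonoidHom e.surjective, ← map_commutator,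
    ← _root_.commutator_def, hQ.1, map_top_of_surjective e.toMonoidHom e.surjective]

theorem le_center_or_eq_top_of_normal (hQ : IsQuasisimple Q) {N : Subgroup Q} [N.Normal] :
    N ≤ center Q ∨ N = ⊤ := by
  have := hQ.2
  rcases (Normal.map ‹N.Normal› _ (QuotientGroup.mk'_surjective (center Q))).eq_bot_or_eq_top
    with h | h
  · left
    rwa [Subgroup.map_eq_bot_iff, QuotientGroup.ker_mk'] at h
  · right
    have hsup : N ⊔ center Q = ⊤ := by
      rw [← QuotientGroup.ker_mk' (center Q), ← comap_map_eq, h, comap_top]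
    rw [eq_top_iff, ← hQ.1]
    exact Normal.commutator_le_of_self_sup_commutative_eq_top hsup inferInstance

end IsQuasisimple

section Components

variable {G : Type*} [Group G]

theorem Subnormal.isSubnormal {H : Subgroup G} (h : Subnormal H ⊤) : H.IsSubnormal := by
  obtain ⟨n, c, rfl, hlast, hstep⟩ := h
  refine Fin.reverseInduction (motive := fun i => (c i).IsSubnormal) (hlast ▸ .top)
    (fun i hi => .step _ _ (hstep i).1 hi ((normal_subgroupOf_iff (hstep i).1).mpr
      fun _ k ha hk => (hstep i).2 k hk _ ha)) 0

theorem Subgroup.commutator_inf_le_inf_of_normal {A B C K : Subgroup G} [K.Normal]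
    (h : ⁅A, B⁆ ≤ C) : ⁅A, K ⊓ B⁆ ≤ K ⊓ C :=
  le_inf ((commutator_mono le_rfl inf_le_left).trans (commutator_le_right A K))
    ((commutator_mono le_rfl inf_le_right).trans h)

namespace IsQuasisimple

variable {L : Subgroup G}

theorem eq_or_commutator_eq_bot_of_le_normalizer (hL : IsQuasisimple L) {N : Subgroup G}
    (hNL : N ≤ L) (hLN : L ≤ normalizer (N : Set G)) : N = L ∨ ⁅L, N⁆ = ⊥ := by
  have : (N.subgroupOf L).Normal := (normal_subgroupOf_iff_le_normalizer hNL).mpr hLN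
  rcases hL.le_center_or_eq_top_of_normal (N := N.subgroupOf L) with h | h
  · right
    rw [← commutator_top_left_eq_bot_iff_le_center] at h
    have := congrArg (map L.subtype) h
    rwa [map_commutator, ← MonoidHom.range_eq_map, range_subtype, subgroupOf_map_subtype,
      inf_of_le_left hNL, Subgroup.map_bot] at this
  · left
    exact le_antisymm hNL (subgroupOf_eq_top.mp h)

-- Climb a chain `L = f 0 ⊴ f 1 ⊴ ⋯ ⊴ f n = G`: once `[L, K ⊓ f i] = 1`, the commutator
-- `[L, K ⊓ f (i + 1)]` lies in `K ⊓ f i`, so the three subgroups lemma and `[L, L] = L` kill it.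
theorem le_or_commutator_eq_bot_of_normal (hL : IsQuasisimple L) (hLs : L.IsSubnormal)
    {K : Subgroup G} [K.Normal] : L ≤ K ∨ ⁅L, K⁆ = ⊥ := by
  obtain ⟨n, f, hmono, hstep, rfl, hn⟩ := hLs.exists_chain
  suffices ∀ i, f 0 ≤ K ⊓ f i ∨ ⁅f 0, K ⊓ f i⁆ = ⊥ by simpa [hn] using this n
  intro i
  induction i with
  | zero =>
    exact (hL.eq_or_commutator_eq_bot_of_le_normalizer inf_le_right
      (le_normalizer_iff_commutator_le_right.mpr
        (commutator_inf_le_inf_of_normal (commutator_le_self _)))).imp (·.ge) id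
  | succ i ih =>
    refine ih.imp (·.trans (inf_le_inf_left _ (hmono i.le_succ))) fun hi => ?_
    have hnorm : f (i + 1) ≤ normalizer (f i : Set G) :=
      (normal_subgroupOf_iff_le_normalizer (hmono i.le_succ)).mp (hstep i)
    have hsub : ⁅f 0, K ⊓ f (i + 1)⁆ ≤ K ⊓ f i := by
      refine commutator_inf_le_inf_of_normal ((commutator_mono (hmono i.zero_le) le_rfl).trans ?_)
      exact le_normalizer_iff_commutator_le_left.mp hnorm
    have h1 : ⁅⁅f 0, K ⊓ f (i + 1)⁆, f 0⁆ = ⊥ := by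
      rw [← le_bot_iff, ← hi, commutator_comm (f 0) (K ⊓ f i)]
      exact commutator_mono hsub le_rfl
    have h2 : ⁅⁅K ⊓ f (i + 1), f 0⁆, f 0⁆ = ⊥ := by rwa [commutator_comm (K ⊓ _)]
    rw [← commutator_commutator_eq_bot_of_rotate h1 h2, ← map_subtype_commutator, hL.1,
      ← MonoidHom.range_eq_map, range_subtype]

theorem le_or_commutator_eq_bot_of_isSubnormal (hL : IsQuasisimple L) (hLs : L.IsSubnormal)
    {H : Subgroup G} (hH : H.IsSubnormal) : L ≤ H ∨ ⁅L, H⁆ = ⊥ := by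
  induction hH with
  | top => exact .inl le_top
  | step H K hHK _ hN ih =>
    rcases ih with hLK | hLK
    · have hL' : IsQuasisimple (L.subgroupOf K) := hL.of_mulEquiv (subgroupOfEquivOfLe hLK).symm
      refine (hL'.le_or_commutator_eq_bot_of_normal hLs.subgroupOf (K := H.subgroupOf K)).imp
        (fun h => ?_) fun h => ?_
      · simpa [hLK] using map_mono (f := K.subtype) h
      · simpa [map_commutator, hLK, hHK] using congrArg (map K.subtype) h
    · exact .inr (le_bot_iff.mp (hLK ▸ commutator_mono le_rfl hHK))

theorem eq_or_commutator_eq_bot (hL : IsQuasisimple L) (hLs : L.IsSubnormal) {M : Subgroup G}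
    (hM : IsQuasisimple M) (hMs : M.IsSubnormal) : L = M ∨ ⁅L, M⁆ = ⊥ := by
  rcases hL.le_or_commutator_eq_bot_of_isSubnormal hLs hMs with hLM | h
  · rcases hM.le_or_commutator_eq_bot_of_isSubnormal hMs hLs with hML | h
    · exact .inl (le_antisymm hLM hML)
    · exact .inr (commutator_comm L M ▸ h)
  · exact .inr h

end IsQuasisimple

theorem IsComponent.le_centralizer_map_conj {Q : Subgroup G} (hQ : IsComponent Q) {x : G}
    (hx : ¬ ∀ q ∈ Q, x * q * x⁻¹ ∈ Q) :
    Q ≤ centralizer (Q.map (MulAut.conj x⁻¹).toMonoidHom : Set G) := by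
  let φ : G ≃* G := MulAut.conj x⁻¹
  have hQs := hQ.1.isSubnormal
  have hne : Q ≠ Q.map φ.toMonoidHom := by
    refine fun h => hx fun q hq => ?_
    have hq' : q ∈ Q.map φ.toMonoidHom := h ▸ hq
    rw [mem_map_equiv] at hq'
    simpa [φ] using hq'
  refine commutator_eq_bot_iff_le_centralizer.mp <|
    (hQ.2.eq_or_commutator_eq_bot hQs ?_ (hQs.map φ.surjective)).resolve_left hne
  exact hQ.2.of_mulEquiv (Q.equivMapOfInjective _ φ.injective)

theorem IsPElement.mul_of_commute {r : ℕ} (hr : r.Prime) {a b : G} (hab : Commute a b)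
    (ha : IsPElement r a) (hb : IsPElement r b) : IsPElement r (a * b) := by
  obtain ⟨m, hm⟩ := ha
  obtain ⟨n, hn⟩ := hb
  have hdvd : orderOf (a * b) ∣ r ^ (m + n) := by
    rw [pow_add, ← hm, ← hn]
    exact hab.orderOf_mul_dvd_mul_orderOf
  obtain ⟨k, -, hk⟩ := (Nat.dvd_prime_pow hr).mp hdvd
  exact ⟨k, hk⟩

end Components

/-- **Lemma.** If `Q` is a component of a finite group `G` and `x ∈ G` does not
normalize `Q`, then for every prime `r` dividing `|Q|` there is an `r`-element
`y ∈ E(G)` with `[x,y]` a nontrivial `r`-element. -/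
theorem statement8 {G : Type*} [Group G] [Finite G] (Q : Subgroup G)
    (hQ : IsComponent Q) (x : G) (hx : ¬ ∀ q ∈ Q, x * q * x⁻¹ ∈ Q)
    {r : ℕ} (hr : r.Prime) (hrdvd : r ∣ Nat.card Q) :
    ∃ y ∈ layer G, (∃ n : ℕ, orderOf y = r ^ n) ∧
      x⁻¹ * y⁻¹ * x * y ≠ 1 ∧ ∃ m : ℕ, orderOf (x⁻¹ * y⁻¹ * x * y) = r ^ m := by
  have : Fact r.Prime := ⟨hr⟩
  have hcent := hQ.le_centralizer_map_conj hx
  obtain ⟨y, hy, hyZ⟩ := exists_isPElement_not_mem_center hQ.2.1 hrdvd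
  have hconj : x⁻¹ * (y : G)⁻¹ * x ∈ Q.map (MulAut.conj x⁻¹).toMonoidHom :=
    mem_map.mpr ⟨_, inv_mem y.2, by simp⟩
  have hy : IsPElement r (y : G) := by rwa [IsPElement, orderOf_coe]
  have hy' : IsPElement r (x⁻¹ * (y : G)⁻¹ * x) := by
    rwa [IsPElement, SemiconjBy.orderOf_eq x (y := (y : G)⁻¹) (by simp [SemiconjBy, mul_assoc]),
      orderOf_inv]
  refine ⟨y, le_sSup (s := {Q | IsComponent Q}) hQ y.2, hy, fun h1 => hyZ ?_,
    hy'.mul_of_commute hr (hcent y.2 _ hconj) hy⟩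
  -- `[x, y] = 1` puts `y⁻¹` in the conjugate component, which centralizes `Q`.
  refine mem_center_iff.mpr fun q => Subtype.ext ?_
  have hc : Commute ((y : G)⁻¹) q := hcent q.2 _ (eq_inv_of_mul_eq_one_left h1 ▸ hconj)
  exact (Commute.inv_left_iff.mp hc).eq.symm
end

section
/- Let G be a finite group and let χ be a nonlinear multiplicative irreducible complex character of G. If a, b ∈ G are nontrivial elements with coprime orders, then χ(a) = 0 or χ(b) = 0; in particular χ(ab) = 0. -/
namespace FDRep

open CategoryTheory Module

variable {k : Type*} [Field k] {G : Type*} [Group G] [Fintype G] (V : FDRep k G)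

theorem commute_ρ_sum_conj (b x : G) : Commute (V.ρ x) (∑ g, V.ρ (g * b * g⁻¹)) := by
  rw [Commute, SemiconjBy, Finset.mul_sum, Finset.sum_mul]
  refine Fintype.sum_equiv (Equiv.mulLeft x) _ _ fun g => ?_
  simp only [← map_mul, Equiv.coe_mulLeft, mul_inv_rev, mul_assoc, inv_mul_cancel, mul_one]

theorem trace_sum_conj (b : G) :
    LinearMap.trace k V (∑ g, V.ρ (g * b * g⁻¹)) = Fintype.card G * V.character b := by
  rw [map_sum]
  change ∑ g, V.character (g * b * g⁻¹) = _
  rw [Finset.sum_congr rfl fun g _ => V.char_conj b g, Finset.sum_const, Finset.card_univ,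
    nsmul_eq_mul]

theorem exists_sum_conj_eq_smul_id [IsAlgClosed k] [Simple V] (b : G) :
    ∃ c : k, ∑ g, V.ρ (g * b * g⁻¹) = c • LinearMap.id := by
  let F : V ⟶ V := ⟨InducedCategory.homMk (ModuleCat.ofHom (∑ g, V.ρ (g * b * g⁻¹))),
    fun x => by
      ext1
      exact (V.commute_ρ_sum_conj b x).eq.symm⟩
  obtain ⟨c, hc⟩ := endomorphism_simple_eq_smul_id k F
  exact ⟨c, (congrArg (fun f : V ⟶ V => f.hom.hom.hom) hc).symm⟩

theorem finrank_smul_sum_conj [IsAlgClosed k] [Simple V] (b : G) :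
    (finrank k V : k) • ∑ g, V.ρ (g * b * g⁻¹) =
      (Fintype.card G * V.character b) • LinearMap.id := by
  obtain ⟨c, hc⟩ := V.exists_sum_conj_eq_smul_id b
  have htrace := V.trace_sum_conj b
  rw [hc, map_smul, LinearMap.trace_id, smul_eq_mul] at htrace
  rw [hc, smul_smul, ← htrace, mul_comm]

theorem finrank_mul_sum_character_mul_conj [IsAlgClosed k] [Simple V] (a b : G) :
    (finrank k V : k) * ∑ g, V.character (a * (g * b * g⁻¹)) =
      Fintype.card G * V.character a * V.character b := by
  have := congrArg (fun f => LinearMap.trace k V (V.ρ a * f)) (V.finrank_smul_sum_conj b)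
  simp only [mul_smul_comm, Finset.mul_sum, map_smul, map_sum, ← map_mul] at this
  change _ • ∑ g, V.character _ = _ • V.character a at this
  rw [smul_eq_mul, smul_eq_mul] at this
  rw [this]
  ring

theorem character_mul_eq_zero_of_character_mul_conj [IsAlgClosed k] [CharZero k] [Simple V]
    (hV : finrank k V ≠ 1) {a b : G}
    (h : ∀ g, V.character (a * (g * b * g⁻¹)) = V.character a * V.character b) :
    V.character a * V.character b = 0 := by
  have key := V.finrank_mul_sum_character_mul_conj a b
  simp only [h, Finset.sum_const, Finset.card_univ, nsmul_eq_mul] at key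
  have hd : (finrank k V : k) - 1 ≠ 0 := sub_ne_zero.mpr (by exact_mod_cast hV)
  have : ((finrank k V : k) - 1) * Fintype.card G * (V.character a * V.character b) = 0 := by
    linear_combination key
  simpa [hd, Fintype.card_ne_zero] using this

end FDRep

open CategoryTheory

/-- **Theorem (i).** If `χ` is a nonlinear multiplicative irreducible complex character
of a finite group `G` and `a, b ∈ G` are nontrivial of coprime orders, then `χ(a) = 0`
or `χ(b) = 0`; in particular `χ(ab) = 0`. -/
theorem statement16 {G : Type} [Group G] [Finite G] (V : FDRep ℂ G) [Simple V]
    (hnl : 1 < Module.finrank ℂ V)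
    (hmult : ∀ x y : G, x ≠ 1 → y ≠ 1 → Nat.Coprime (orderOf x) (orderOf y) →
      V.character (x * y) = V.character x * V.character y)
    (a b : G) (ha : a ≠ 1) (hb : b ≠ 1)
    (hab : Nat.Coprime (orderOf a) (orderOf b)) :
    (V.character a = 0 ∨ V.character b = 0) ∧ V.character (a * b) = 0 := by
  have := Fintype.ofFinite G
  have hconj (g : G) : V.character (a * (g * b * g⁻¹)) = V.character a * V.character b := by
    have hne : g * b * g⁻¹ ≠ 1 := fun h => hb (conj_eq_one_iff.mp h)
    have hord : orderOf (g * b * g⁻¹) = orderOf b := by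
      simpa [MulAut.conj_apply] using (MulAut.conj g).orderOf_eq b
    rw [hmult a _ ha hne (hord ▸ hab), V.char_conj]
  have key := V.character_mul_eq_zero_of_character_mul_conj hnl.ne' hconj
  exact ⟨mul_eq_zero.mp key, (hmult a b ha hb hab).trans key⟩
end
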